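/- arXiv:1702.00119 — 4 statements merged into one kernel-verified Lean document; each statement's English description precedes it below -/
import Mathlib

section
/- The disemigroup ([X⁺]_ω, ⊢, ⊣) of normal diwords is the free disemigroup on X: for any disemigroup D and any map f : X → D, there is a unique disemigroup homomorphism F : [X⁺]_ω → D with F((x,1)) = f(x) for all x ∈ X. -/
/-- Normal diwords on X: pairs (u, m) with u a nonempty word on X and 1 ≤ m ≤ |u|. -/
def Diword (X : Type*) : Type _ :=
  {p : List X × ℕ // p.1 ≠ [] ∧ 1 ≤ p.2 ∧ p.2 ≤ p.1.length}

/-- (u,m) ⊢ (v,n) = (uv, |u| + n). -/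
def Diword.dL {X : Type*} (a b : Diword X) : Diword X :=
  ⟨(a.1.1 ++ b.1.1, a.1.1.length + b.1.2), by
    obtain ⟨ha1, _, _⟩ := a.2
    obtain ⟨hb1, hb2, hb3⟩ := b.2
    refine ⟨by simp [ha1], by omega, by simp only [List.length_append]; omega⟩⟩

/-- (u,m) ⊣ (v,n) = (uv, m). -/
def Diword.dR {X : Type*} (a b : Diword X) : Diword X :=
  ⟨(a.1.1 ++ b.1.1, a.1.2), by
    obtain ⟨ha1, ha2, ha3⟩ := a.2
    obtain ⟨hb1, _, _⟩ := b.2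
    refine ⟨by simp [ha1], ha2, by simp only [List.length_append]; omega⟩⟩

/-- The embedding X → [X⁺]_ω, x ↦ (x, 1). -/
def Diword.ofLetter {X : Type*} (x : X) : Diword X :=
  ⟨([x], 1), by simp⟩

/-- A disemigroup: two associative operations satisfying the three dialgebra identities. -/
structure Disemigroup (D : Type*) where
  l : D → D → D
  r : D → D → D
  l_assoc : ∀ a b c : D, l (l a b) c = l a (l b c)
  r_assoc : ∀ a b c : D, r (r a b) c = r a (r b c)
  ax1 : ∀ a b c : D, r a (l b c) = r a (r b c)
  ax2 : ∀ a b c : D, l (r a b) c = l (l a b) c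
  ax3 : ∀ a b c : D, l a (r b c) = r (l a b) c

/-!
A diword `(x :: t, m + 1)` is generated from letters by peeling off its first letter:
it equals `x ⊣ (t, 1)` when `m = 0` and `x ⊢ (t, m)` otherwise. This forces uniqueness and
dictates the candidate `f x₁ ⊢ ⋯ ⊢ f xₘ₊₁ ⊣ ⋯ ⊣ f xₙ` (bracketed to the right). That this
candidate is multiplicative rests on the dialgebra identities, through the fact that on the
right of `⊣` the position of the pointer is irrelevant.
-/

namespace Disemigroup

variable {X D : Type*} (S : Disemigroup D) (f : X → D)

/-- `S.evalWord f x t m` is the value of the diword `(x :: t, m + 1)`: the letters up to the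
pointer are combined with `⊢`, the remaining ones with `⊣`. -/
def evalWord : X → List X → ℕ → D
  | x, [], _ => f x
  | x, y :: t, 0 => S.r (f x) (evalWord y t 0)
  | x, y :: t, m + 1 => S.l (f x) (evalWord y t m)

theorem r_evalWord_eq_r_evalWord_zero (a : D) (y : X) (s : List X) (n : ℕ) :
    S.r a (S.evalWord f y s n) = S.r a (S.evalWord f y s 0) := by
  induction s generalizing a y n with
  | nil => rfl
  | cons z s ih =>
    cases n with
    | zero => rfl
    | succ n =>
      calc S.r a (S.l (f y) (S.evalWord f z s n))
          = S.r (S.r a (f y)) (S.evalWord f z s n) := by rw [S.ax1, S.r_assoc]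
        _ = S.r (S.r a (f y)) (S.evalWord f z s 0) := ih _ _ _
        _ = S.r a (S.r (f y) (S.evalWord f z s 0)) := S.r_assoc _ _ _

theorem evalWord_append_l (x y : X) (t s : List X) (m n : ℕ) :
    S.evalWord f x (t ++ y :: s) (t.length + n + 1) =
      S.l (S.evalWord f x t m) (S.evalWord f y s n) := by
  induction t generalizing x m with
  | nil => simp only [List.nil_append, List.length_nil, Nat.zero_add]; rfl
  | cons z t ih =>
    have hlen : (z :: t).length + n + 1 = (t.length + n + 1) + 1 := by simp; omega
    rw [List.cons_append, hlen]
    cases m with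
    | zero =>
      show S.l (f x) _ = S.l (S.r (f x) _) _
      rw [S.ax2, S.l_assoc, ih z 0]
    | succ m =>
      show S.l (f x) _ = S.l (S.l (f x) _) _
      rw [S.l_assoc, ih z m]

theorem evalWord_append_r (x y : X) (t s : List X) (m n : ℕ) (hm : m ≤ t.length) :
    S.evalWord f x (t ++ y :: s) m = S.r (S.evalWord f x t m) (S.evalWord f y s n) := by
  induction t generalizing x m with
  | nil =>
    obtain rfl : m = 0 := Nat.le_zero.mp hm
    exact (S.r_evalWord_eq_r_evalWord_zero f (f x) y s n).symm
  | cons z t ih =>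
    rw [List.cons_append]
    cases m with
    | zero =>
      show S.r (f x) (S.evalWord f z (t ++ y :: s) 0) = S.r (S.r (f x) _) _
      rw [S.r_assoc, ih z 0 (Nat.zero_le _)]
    | succ m =>
      show S.l (f x) (S.evalWord f z (t ++ y :: s) m) = S.r (S.l (f x) _) _
      rw [← S.ax3, ih z m (Nat.le_of_succ_le_succ hm)]

end Disemigroup

namespace Diword

variable {X D : Type*}

/-- The diword `(x :: t, m + 1)`: here the pointer `m` is counted from `0`. -/
def mkCons (x : X) (t : List X) (m : ℕ) (h : m ≤ t.length) : Diword X :=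
  ⟨(x :: t, m + 1), List.cons_ne_nil x t, Nat.le_add_left 1 m, Nat.succ_le_succ h⟩

theorem exists_eq_mkCons (a : Diword X) : ∃ x t m h, a = mkCons x t m h := by
  obtain ⟨⟨_ | ⟨x, t⟩, _ | m⟩, hne, hpos, hle⟩ := a
  · exact absurd rfl hne
  · exact absurd rfl hne
  · simp at hpos
  · exact ⟨x, t, m, Nat.le_of_succ_le_succ hle, rfl⟩

theorem mkCons_dL_mkCons (x y : X) (t s : List X) (m n : ℕ) (hm : m ≤ t.length)
    (hn : n ≤ s.length) :
    (mkCons x t m hm).dL (mkCons y s n hn) =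
      mkCons x (t ++ y :: s) (t.length + n + 1) (by simp; omega) :=
  Subtype.ext (Prod.ext rfl (by simp only [dL, mkCons, List.length_cons]; omega))

theorem mkCons_dR_mkCons (x y : X) (t s : List X) (m n : ℕ) (hm : m ≤ t.length)
    (hn : n ≤ s.length) :
    (mkCons x t m hm).dR (mkCons y s n hn) = mkCons x (t ++ y :: s) m (by simp; omega) :=
  rfl

theorem ofLetter_dL_mkCons (x y : X) (t : List X) (m : ℕ) (h : m ≤ t.length) :
    (ofLetter x).dL (mkCons y t m h) = mkCons x (y :: t) (m + 1) (Nat.succ_le_succ h) :=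
  Subtype.ext (Prod.ext rfl (Nat.add_comm 1 (m + 1)))

theorem ofLetter_dR_mkCons (x y : X) (t : List X) :
    (ofLetter x).dR (mkCons y t 0 (Nat.zero_le _)) = mkCons x (y :: t) 0 (Nat.zero_le _) :=
  rfl

def lift (S : Disemigroup D) (f : X → D) (a : Diword X) : D :=
  S.evalWord f (a.1.1.head a.2.1) a.1.1.tail (a.1.2 - 1)

variable (S : Disemigroup D) (f : X → D)

theorem lift_mkCons (x : X) (t : List X) (m : ℕ) (h : m ≤ t.length) :
    lift S f (mkCons x t m h) = S.evalWord f x t m :=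
  rfl

theorem lift_dL (a b : Diword X) : lift S f (a.dL b) = S.l (lift S f a) (lift S f b) := by
  obtain ⟨x, t, m, hm, rfl⟩ := exists_eq_mkCons a
  obtain ⟨y, s, n, hn, rfl⟩ := exists_eq_mkCons b
  rw [mkCons_dL_mkCons]
  exact S.evalWord_append_l f x y t s m n

theorem lift_dR (a b : Diword X) : lift S f (a.dR b) = S.r (lift S f a) (lift S f b) := by
  obtain ⟨x, t, m, hm, rfl⟩ := exists_eq_mkCons a
  obtain ⟨y, s, n, hn, rfl⟩ := exists_eq_mkCons b
  rw [mkCons_dR_mkCons]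
  exact S.evalWord_append_r f x y t s m n hm

theorem lift_ofLetter (x : X) : lift S f (ofLetter x) = f x :=
  rfl

theorem eq_lift {G : Diword X → D} (hl : ∀ a b, G (a.dL b) = S.l (G a) (G b))
    (hr : ∀ a b, G (a.dR b) = S.r (G a) (G b)) (hx : ∀ x, G (ofLetter x) = f x) :
    G = lift S f := by
  funext a
  obtain ⟨x, t, m, h, rfl⟩ := exists_eq_mkCons a
  rw [lift_mkCons]
  induction t generalizing x m with
  | nil =>
    obtain rfl : m = 0 := Nat.le_zero.mp h
    exact hx x
  | cons y t ih =>
    cases m with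
    | zero =>
      rw [← ofLetter_dR_mkCons x y t, hr, hx, ih]
      rfl
    | succ m =>
      rw [← ofLetter_dL_mkCons x y t m (Nat.le_of_succ_le_succ h), hl, hx, ih]
      rfl

end Diword

/-- ([X⁺]_ω, ⊢, ⊣) is the free disemigroup on X: for any disemigroup D
and any f : X → D there is a unique map F : [X⁺]_ω → D preserving both operations
with F (x,1) = f x for all x ∈ X. -/
theorem stmt2 {X D : Type*} (S : Disemigroup D) (f : X → D) :
    ∃! F : Diword X → D,
      (∀ a b : Diword X, F (a.dL b) = S.l (F a) (F b)) ∧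
      (∀ a b : Diword X, F (a.dR b) = S.r (F a) (F b)) ∧
      (∀ x : X, F (Diword.ofLetter x) = f x) :=
  ⟨Diword.lift S f, ⟨Diword.lift_dL S f, Diword.lift_dR S f, Diword.lift_ofLetter S f⟩,
    fun _ ⟨hl, hr, hx⟩ => Diword.eq_lift S f hl hr hx⟩
end

section
/- Let f ∈ Di⟨X⟩ be a nonzero strong polynomial (its leading monomial's associative word is strictly greater than the associative word of any other monomial appearing in f). Then for any normal diword (u,m): the leading monomial of (u,m) ⊣ f equals (u,m) ⊣ f̄, and the leading monomial of f ⊢ (u,m) equals f̄ ⊢ (u,m). -/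
/-- Monomials: pairs (u, m) with u a word and m a center position. -/
abbrev Mon (X : Type*) := List X × ℕ

/-- (u,m) is a normal diword: u nonempty, 1 ≤ m ≤ |u|. -/
def IsND {X : Type*} (p : Mon X) : Prop := p.1 ≠ [] ∧ 1 ≤ p.2 ∧ p.2 ≤ p.1.length

/-- (u,m) ⊢ (v,n) = (uv, |u| + n). -/
def opL {X : Type*} (a b : Mon X) : Mon X := (a.1 ++ b.1, a.1.length + b.2)

/-- (u,m) ⊣ (v,n) = (uv, m). -/
def opR {X : Type*} (a b : Mon X) : Mon X := (a.1 ++ b.1, a.2)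

/-- Bilinear extension of an operation on monomials to the free module Di⟨X⟩. -/
noncomputable def dmul {X k : Type*} [CommRing k] (op : Mon X → Mon X → Mon X)
    (f g : Mon X →₀ k) : Mon X →₀ k :=
  f.sum fun a ca => g.sum fun b cb => Finsupp.single (op a b) (ca * cb)

/-- `a` is the leading monomial of `f` w.r.t. the monomial-center ordering induced
by an ordering on words: first compare words, then centers. -/
def IsLM {X k : Type*} [CommRing k] [LinearOrder (List X)]
    (f : Mon X →₀ k) (a : Mon X) : Prop :=
  a ∈ f.support ∧ ∀ b ∈ f.support, b.1 < a.1 ∨ (b.1 = a.1 ∧ b.2 ≤ a.2)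

/-- `f` is strong: the word of its leading monomial is strictly greater than the
word of every other monomial in its support. -/
def IsStrong {X k : Type*} [CommRing k] [LinearOrder (List X)]
    (f : Mon X →₀ k) (a : Mon X) : Prop :=
  IsLM f a ∧ ∀ b ∈ f.support, b ≠ a → b.1 < a.1

/-- For a nonzero strong f ∈ Di⟨X⟩ and a normal diword (u,m),
lm((u,m) ⊣ f) = (u,m) ⊣ lm(f) and lm(f ⊢ (u,m)) = lm(f) ⊢ (u,m). -/
theorem stmt7 {X k : Type*} [CommRing k] [LinearOrder (List X)]
    (hwf : WellFoundedLT (List X))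
    (hmono : ∀ u v w : List X, u ≠ [] → v ≠ [] → w ≠ [] →
      u < v → u ++ w < v ++ w ∧ w ++ u < w ++ v)
    (f : Mon X →₀ k) (hf : f ≠ 0)
    (hsupp : ∀ p ∈ f.support, IsND p)
    (a : Mon X) (ha : IsStrong f a)
    (p : Mon X) (hp : IsND p) :
    IsLM (dmul opR (Finsupp.single p (1 : k)) f) (opR p a) ∧
    IsLM (dmul opL f (Finsupp.single p (1 : k))) (opL a p) := by
  obtain ⟨⟨haS, hlm⟩, hstr⟩ := ha
  have hane : a.1 ≠ [] := (hsupp a haS).1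
  have hpne : p.1 ≠ [] := hp.1
  have hR : dmul opR (Finsupp.single p (1:k)) f
      = f.sum fun b cb => Finsupp.single (opR p b) cb := by
    unfold dmul
    rw [Finsupp.sum_single_index] <;> simp
  have hL : dmul opL f (Finsupp.single p (1:k))
      = f.sum fun b cb => Finsupp.single (opL b p) cb := by
    unfold dmul
    refine Finset.sum_congr rfl fun b _ => ?_
    dsimp only
    rw [Finsupp.sum_single_index] <;> simp
  have key : ∀ (φ : Mon X → Mon X),
      (∀ b ∈ f.support, b ≠ a → (φ b).1 < (φ a).1) →
      IsLM (f.sum fun b cb => Finsupp.single (φ b) cb) (φ a) := by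
    intro φ hφ
    have hne : ∀ b ∈ f.support, b ≠ a → φ b ≠ φ a := fun b hb hba h =>
      lt_irrefl _ (h ▸ hφ b hb hba)
    have hval : (f.sum fun b cb => Finsupp.single (φ b) cb) (φ a) = f a := by
      rw [Finsupp.sum_apply, Finsupp.sum, Finset.sum_eq_single a]
      · simp
      · intro b hb hba
        simp [Finsupp.single_apply, hne b hb hba]
      · intro h
        simp [Finsupp.notMem_support_iff.mp h]
    constructor
    · rw [Finsupp.mem_support_iff, hval]
      exact Finsupp.mem_support_iff.mp haS
    · intro q hq
      have hsub := Finsupp.support_sum hq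
      rw [Finset.mem_biUnion] at hsub
      obtain ⟨b, hb, hqb⟩ := hsub
      have hq' : q = φ b := by
        have := Finsupp.support_single_subset hqb
        simpa using this
      subst hq'
      by_cases hba : b = a
      · subst hba; exact Or.inr ⟨rfl, le_refl _⟩
      · exact Or.inl (hφ b hb hba)
  constructor
  · rw [hR]
    exact key (fun b => opR p b) fun b hb hba =>
      (hmono b.1 a.1 p.1 (hsupp b hb).1 hane hpne (hstr b hb hba)).2
  · rw [hL]
    exact key (fun b => opL b p) fun b hb hba =>
      (hmono b.1 a.1 p.1 (hsupp b hb).1 hane hpne (hstr b hb hba)).1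
end

section
/- In Di⟨X⟩ with a monomial-center ordering, for any nonzero f and normal diword (u,m), the leading monomial of (u,m) ⊣ f is ≤ (u,m) ⊣ f̄, and the leading monomial of f ⊢ (u,m) is ≤ f̄ ⊢ (u,m). -/
/-- (u,m) ≤ (v,n) in the monomial-center ordering: u < v, or u = v and m ≤ n. -/
def mcLE {X : Type*} [LinearOrder (List X)] (a b : Mon X) : Prop :=
  a.1 < b.1 ∨ (a.1 = b.1 ∧ a.2 ≤ b.2)


lemma dmul_support_sub {X k : Type*} [CommRing k] (op : Mon X → Mon X → Mon X)
    (f g : Mon X →₀ k) (c : Mon X) (hc : c ∈ (dmul op f g).support) :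
    ∃ a ∈ f.support, ∃ b ∈ g.support, c = op a b := by
  classical
  have h1 := Finsupp.support_sum hc
  simp only [Finset.mem_biUnion] at h1
  obtain ⟨a, haf, hca⟩ := h1
  have h2 := Finsupp.support_sum hca
  simp only [Finset.mem_biUnion] at h2
  obtain ⟨b, hbg, hcb⟩ := h2
  have := Finsupp.support_single_subset hcb
  simp only [Finset.mem_singleton] at this
  exact ⟨a, haf, b, hbg, this⟩

/-- For nonzero f ∈ Di⟨X⟩ and a normal diword (u,m),
lm((u,m) ⊣ f) ≤ (u,m) ⊣ lm(f) and lm(f ⊢ (u,m)) ≤ lm(f) ⊢ (u,m). -/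
theorem stmt8 {X k : Type*} [CommRing k] [LinearOrder (List X)]
    (hwf : WellFoundedLT (List X))
    (hmono : ∀ u v w : List X, u ≠ [] → v ≠ [] → w ≠ [] →
      u < v → u ++ w < v ++ w ∧ w ++ u < w ++ v)
    (f : Mon X →₀ k) (hf : f ≠ 0)
    (hsupp : ∀ p ∈ f.support, IsND p)
    (a : Mon X) (ha : IsLM f a)
    (p : Mon X) (hp : IsND p) :
    (∀ c : Mon X, IsLM (dmul opR (Finsupp.single p (1 : k)) f) c → mcLE c (opR p a)) ∧
    (∀ c : Mon X, IsLM (dmul opL f (Finsupp.single p (1 : k))) c → mcLE c (opL a p)) := by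
  obtain ⟨haf, hamax⟩ := ha
  have hane : a.1 ≠ [] := (hsupp a haf).1
  have hpne : p.1 ≠ [] := hp.1
  constructor
  · rintro c ⟨hcs, -⟩
    obtain ⟨q, hq, b, hbf, hce⟩ := dmul_support_sub _ _ _ _ hcs
    have hqp : q = p := by
      have := Finsupp.support_single_subset hq
      simpa using this
    rw [hqp] at hce
    subst hce
    have hbne : b.1 ≠ [] := (hsupp b hbf).1
    rcases hamax b hbf with h | ⟨h1, h2⟩
    · exact Or.inl ((hmono b.1 a.1 p.1 hbne hane hpne h).2)
    · exact Or.inr ⟨by simp [opR, h1], le_refl _⟩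
  · rintro c ⟨hcs, -⟩
    obtain ⟨b, hbf, q, hq, hce⟩ := dmul_support_sub _ _ _ _ hcs
    have hqp : q = p := by
      have := Finsupp.support_single_subset hq
      simpa using this
    rw [hqp] at hce
    subst hce
    have hbne : b.1 ≠ [] := (hsupp b hbf).1
    rcases hamax b hbf with h | ⟨h1, h2⟩
    · exact Or.inl ((hmono b.1 a.1 p.1 hbne hane hpne h).1)
    · exact Or.inr ⟨by simp [opL, h1], by simp [opL, h1]⟩
end

section
/- Define on the set FAd(X) = {(⌊u⌋, t) : ⌊u⌋ a sorted nonempty word on X, 1 ≤ t ≤ |u|, and either t = 1 or the t-th letter of ⌊u⌋ is strictly greater than the (t−1)-th} the operations (⌊u⌋,t) ⊢ (⌊v⌋,p) = (⌊uv⌋, τ_{vu}(p)) and (⌊u⌋,t) ⊣ (⌊v⌋,p) = (⌊uv⌋, τ_{uv}(t)). Then (FAd(X), ⊢, ⊣) is a disemigroup satisfying a ⊢ b = b ⊣ a for all a, b. -/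
/-!
For `1 ≤ t ≤ |u|` the product `(u, t) ⊣ (v, p)` is `⌊uv⌋` with the first occurrence of the letter
`u_t` marked, i.e. `(⌊uv⌋, λ_{⌊uv⌋}(u_t))`, and the letter marked in such a pair is again `u_t`.
So an iterated `⊣`-product is the sorted concatenation of all factors with the first factor's
letter marked, and since sorting only sees the multiset of letters, the bracketing does not
matter. As `⌊uv⌋ = ⌊vu⌋`, we have `a ⊢ b = b ⊣ a`, which reduces every identity involving `⊢` to
associativity of `⊣`, except the two that hold because `⊢` and `⊣` produce the same word.
-/

variable {X : Type*} [LinearOrder X] [Inhabited X]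

/-- ⌊u⌋: the nondecreasing rearrangement of the word u. -/
def sortW (u : List X) : List X := u.insertionSort (· ≤ ·)

/-- λ_{⌊u⌋}(x): the first (1-based) position of the letter x in ⌊u⌋. -/
def lam (u : List X) (x : X) : ℕ := (sortW u).idxOf x + 1

/-- τ_u(m) = λ_{⌊u⌋}(u_m), where u_m is the m-th (1-based) letter of u. -/
def tau (u : List X) (m : ℕ) : ℕ := lam u (u.getD (m - 1) default)

/-- FAd(X): pairs (⌊u⌋, t) with ⌊u⌋ a sorted nonempty word, 1 ≤ t ≤ |u|, and
either t = 1 or the t-th letter of ⌊u⌋ is strictly greater than the (t−1)-th. -/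
def FAdSet : Set (List X × ℕ) :=
  {p | p.1 ≠ [] ∧ List.Pairwise (· ≤ ·) p.1 ∧ 1 ≤ p.2 ∧ p.2 ≤ p.1.length ∧
    (p.2 = 1 ∨ p.1.getD (p.2 - 2) default < p.1.getD (p.2 - 1) default)}

/-- (⌊u⌋,t) ⊢ (⌊v⌋,p) = (⌊uv⌋, τ_{vu}(p)). -/
def aopL (a b : List X × ℕ) : List X × ℕ := (sortW (a.1 ++ b.1), tau (b.1 ++ a.1) b.2)

/-- (⌊u⌋,t) ⊣ (⌊v⌋,p) = (⌊uv⌋, τ_{uv}(t)). -/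
def aopR (a b : List X × ℕ) : List X × ℕ := (sortW (a.1 ++ b.1), tau (a.1 ++ b.1) a.2)

theorem List.getElem_lt_of_lt_idxOf {α : Type*} [PartialOrder α] [DecidableEq α] {s : List α}
    (hs : s.Pairwise (· ≤ ·)) {x : α} (hx : x ∈ s) {i : ℕ} (hi : i < s.idxOf x) :
    s[i]'(hi.trans (List.idxOf_lt_length_iff.2 hx)) < x := by
  have hk := List.idxOf_lt_length_iff.2 hx
  refine lt_of_le_of_ne ?_ ?_
  · calc s[i] ≤ s[s.idxOf x] := List.pairwise_iff_getElem.1 hs _ _ _ hk hi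
      _ = x := List.getElem_idxOf hk
  · simpa using List.not_of_lt_findIdx hi

section Sorting

variable {α : Type*} [LinearOrder α]

lemma pairwise_sortW (u : List α) : (sortW u).Pairwise (· ≤ ·) :=
  List.pairwise_insertionSort _ u

lemma perm_sortW (u : List α) : List.Perm (sortW u) u :=
  List.perm_insertionSort _ u

lemma sortW_eq_of_perm {u v : List α} (h : List.Perm u v) : sortW u = sortW v :=
  List.Perm.eq_of_pairwise' (pairwise_sortW u) (pairwise_sortW v)
    ((perm_sortW u).trans (h.trans (perm_sortW v).symm))

lemma mem_sortW {u : List α} {x : α} : x ∈ sortW u ↔ x ∈ u :=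
  (perm_sortW u).mem_iff

lemma lam_sub_one_lt {l : List α} {x : α} (hx : x ∈ l) : lam l x - 1 < (sortW l).length := by
  simpa [lam] using List.idxOf_lt_length_iff.2 (mem_sortW.2 hx)

/-- `(⌊l⌋, λ_l(x))`: the sorted word with the first occurrence of `x` marked. -/
def markedSort (l : List α) (x : α) : List α × ℕ := (sortW l, lam l x)

lemma markedSort_eq_of_perm {u v : List α} (h : List.Perm u v) (x : α) :
    markedSort u x = markedSort v x := by
  simp only [markedSort, lam, sortW_eq_of_perm h]

end Sorting

section Marking

variable {α : Type*} [Inhabited α]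

def markedLetter (a : List α × ℕ) : α := a.1.getD (a.2 - 1) default

lemma markedLetter_mem {a : List α × ℕ} (ha : a.2 - 1 < a.1.length) : markedLetter a ∈ a.1 := by
  simpa only [markedLetter, List.getD_eq_getElem _ _ ha] using List.getElem_mem ha

end Marking

lemma markedLetter_markedSort {l : List X} {x : X} (hx : x ∈ l) :
    markedLetter (markedSort l x) = x := by
  have hk := List.idxOf_lt_length_iff.2 (mem_sortW.2 hx)
  simp only [markedLetter, markedSort, lam, Nat.add_sub_cancel,
    List.getD_eq_getElem _ _ hk, List.getElem_idxOf hk]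

lemma markedSort_mem_FAdSet {l : List X} {x : X} (hx : x ∈ l) : markedSort l x ∈ FAdSet := by
  have hk := List.idxOf_lt_length_iff.2 (mem_sortW.2 hx)
  simp only [FAdSet, Set.mem_ofPred_eq, markedSort, lam]
  refine ⟨List.ne_nil_of_length_pos (by omega), pairwise_sortW l, by omega, by omega, ?_⟩
  rcases Nat.eq_zero_or_pos ((sortW l).idxOf x) with h0 | hpos
  · exact .inl (by omega)
  · right
    rw [List.getD_eq_getElem _ _ (by omega), List.getD_eq_getElem _ _ (by omega)]
    simp only [Nat.add_sub_cancel, List.getElem_idxOf hk]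
    exact List.getElem_lt_of_lt_idxOf (pairwise_sortW l) (mem_sortW.2 hx) (by omega)

lemma aopR_eq_markedSort {a : List X × ℕ} (b : List X × ℕ) (ha : a.2 - 1 < a.1.length) :
    aopR a b = markedSort (a.1 ++ b.1) (markedLetter a) := by
  simp only [aopR, tau, markedSort, markedLetter, List.getD_append _ _ _ _ ha]

lemma aopR_markedSort {l : List X} {x : X} (hx : x ∈ l) (c : List X × ℕ) :
    aopR (markedSort l x) c = markedSort (sortW l ++ c.1) x := by
  rw [aopR_eq_markedSort c (lam_sub_one_lt hx), markedLetter_markedSort hx]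
  rfl

open List in
lemma aopR_assoc {a : List X × ℕ} (b c : List X × ℕ) (ha : a.2 - 1 < a.1.length) :
    aopR (aopR a b) c = aopR a (aopR b c) := by
  rw [aopR_eq_markedSort b ha, aopR_eq_markedSort _ ha,
    aopR_markedSort (List.mem_append_left _ (markedLetter_mem ha))]
  refine markedSort_eq_of_perm ?_ _
  calc sortW (a.1 ++ b.1) ++ c.1 ~ a.1 ++ b.1 ++ c.1 := (perm_sortW _).append_right _
    _ = a.1 ++ (b.1 ++ c.1) := append_assoc _ _ _
    _ ~ a.1 ++ sortW (b.1 ++ c.1) := (perm_sortW _).symm.append_left _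

lemma aopL_eq_aopR (a b : List X × ℕ) : aopL a b = aopR b a :=
  Prod.ext (sortW_eq_of_perm List.perm_append_comm) rfl

lemma snd_sub_one_lt_of_mem_FAdSet {a : List X × ℕ} (ha : a ∈ FAdSet) :
    a.2 - 1 < a.1.length := by
  obtain ⟨-, -, h1, h2, -⟩ := ha
  omega

lemma aopR_mem_FAdSet {a : List X × ℕ} (b : List X × ℕ) (ha : a ∈ FAdSet) :
    aopR a b ∈ FAdSet := by
  have ha' := snd_sub_one_lt_of_mem_FAdSet ha
  rw [aopR_eq_markedSort b ha']
  exact markedSort_mem_FAdSet (List.mem_append_left _ (markedLetter_mem ha'))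

/-- (FAd(X), ⊢, ⊣) is a disemigroup (closed under both operations,
both associative, satisfying the three dialgebra identities) with a ⊢ b = b ⊣ a. -/
theorem stmt12 :
    (∀ a ∈ FAdSet (X := X), ∀ b ∈ FAdSet, aopL a b ∈ FAdSet ∧ aopR a b ∈ FAdSet) ∧
    (∀ a ∈ FAdSet (X := X), ∀ b ∈ FAdSet, ∀ c ∈ FAdSet,
      aopL (aopL a b) c = aopL a (aopL b c) ∧
      aopR (aopR a b) c = aopR a (aopR b c) ∧
      aopR a (aopL b c) = aopR a (aopR b c) ∧
      aopL (aopR a b) c = aopL (aopL a b) c ∧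
      aopL a (aopR b c) = aopR (aopL a b) c) ∧
    (∀ a ∈ FAdSet (X := X), ∀ b ∈ FAdSet, aopL a b = aopR b a) := by
  have assoc : ∀ a ∈ FAdSet (X := X), ∀ b c, aopR (aopR a b) c = aopR a (aopR b c) :=
    fun a ha b c => aopR_assoc b c (snd_sub_one_lt_of_mem_FAdSet ha)
  refine ⟨fun a ha b hb => ⟨?_, aopR_mem_FAdSet b ha⟩,
    fun a ha b hb c hc => ⟨?_, assoc a ha b c, rfl, rfl, ?_⟩, fun a _ b _ => aopL_eq_aopR a b⟩
  · rw [aopL_eq_aopR]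
    exact aopR_mem_FAdSet a hb
  · simp only [aopL_eq_aopR]
    exact (assoc c hc b a).symm
  · calc aopL a (aopR b c) = aopR b (aopL c a) := by rw [aopL_eq_aopR]; exact assoc b hb c a
      _ = aopR (aopL a b) c := by rw [aopL_eq_aopR c a, aopL_eq_aopR a b, assoc b hb]
end
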